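/- arXiv:2106.02026 — 2 statements merged into one kernel-verified Lean document; each statement's English description precedes it below -/
import Mathlib

section
/- Let A be an n×n finite-upper-triangular matrix over ℤ ∪ {-∞} which is a finite-upper-triangular-W-bounded-difference matrix with zeros on the main diagonal. Define Ā by replacing every entry below the main diagonal (i > j) by W·(j - i). Then Ā is a W-bounded-difference matrix (for all adjacent entries, differences are at most W in absolute value), and for any similarly modified B̄, the max-plus product Ā ⋆ B̄ agrees with A ⋆ B on all entries (i,j) with i ≤ j. -/
/-!
Bounded differences along row `i` of `A` give `A i k ≤ A i j + W (k - j)` for `k > j ≥ i`, and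
down column `j` of `B` they give `B k j ≤ B i j + W (i - k)` for `k < i ≤ j`. The filled entries
`W (j - k)` and `W (k - i)` cancel exactly these slacks, so in `Ā ⋆ B̄` each new term with `k`
outside `[i, j]` is dominated by the term at `k = j` or `k = i`, while the terms of `A ⋆ B` with
`k` outside `[i, j]` are `⊥`. Since the diagonal is `0 = W (i - i)`, the filled lower triangle joins
the upper one with steps of exactly `W`.
-/

open Finset

section Chain

variable {α : Type*} [AddMonoid α] [Preorder α] [AddRightMono α] {n : ℕ}

theorem Fin.le_add_nsmul_of_succ_le (f : Fin n → α) (c : α) {a b : Fin n} (hab : a ≤ b)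
    (hstep : ∀ (m : Fin n) (h : (m : ℕ) + 1 < n), a ≤ m → f ⟨m + 1, h⟩ ≤ f m + c) :
    f b ≤ f a + ((b : ℕ) - a) • c := by
  obtain ⟨b, hb⟩ := b
  replace hab : (a : ℕ) ≤ b := hab
  induction b, hab using Nat.le_induction with
  | base => simp
  | succ b hab ih =>
    calc f ⟨b + 1, hb⟩ ≤ f ⟨b, by omega⟩ + c := hstep ⟨b, by omega⟩ hb hab
      _ ≤ f a + (b - a) • c + c := add_le_add_left (ih (by omega)) c
      _ = f a + (b + 1 - a) • c := by rw [add_assoc, ← succ_nsmul, Nat.sub_add_comm hab]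

theorem Fin.le_add_nsmul_of_le_succ (f : Fin n → α) (c : α) {a b : Fin n} (hab : a ≤ b)
    (hstep : ∀ (m : Fin n) (h : (m : ℕ) + 1 < n), (m : ℕ) + 1 ≤ b → f m ≤ f ⟨m + 1, h⟩ + c) :
    f a ≤ f b + ((b : ℕ) - a) • c := by
  obtain ⟨b, hb⟩ := b
  replace hab : (a : ℕ) ≤ b := hab
  induction b, hab using Nat.le_induction with
  | base => simp
  | succ b hab ih =>
    calc f a ≤ f ⟨b, by omega⟩ + (b - a) • c :=
          ih (by omega) fun m h hm => hstep m h (by simp only at hm ⊢; omega)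
      _ ≤ f ⟨b + 1, hb⟩ + c + (b - a) • c := add_le_add_left (hstep ⟨b, by omega⟩ hb le_rfl) _
      _ = f ⟨b + 1, hb⟩ + (b + 1 - a) • c := by rw [add_assoc, ← succ_nsmul', Nat.sub_add_comm hab]

end Chain

theorem WithBot.coe_add_le_of_le_add_coe_neg {G : Type*} [AddCommGroup G] [PartialOrder G]
    [IsOrderedAddMonoid G] {x y : WithBot G} {c : G} (h : x ≤ y + ((-c : G) : WithBot G)) :
    (c : WithBot G) + x ≤ y :=
  calc (c : WithBot G) + x ≤ c + (y + ((-c : G) : WithBot G)) := add_le_add_right h _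
    _ = y := by rw [add_left_comm, ← WithBot.coe_add, add_neg_cancel, WithBot.coe_zero, add_zero]

section FillLower

variable {n : ℕ} (W : ℕ) (A B : Fin n → Fin n → WithBot ℤ)

def fillLower (i j : Fin n) : WithBot ℤ :=
  if i ≤ j then A i j else (((W : ℤ) * ((j : ℤ) - (i : ℤ)) : ℤ) : WithBot ℤ)

variable {W A B}

theorem fillLower_of_le {i j : Fin n} (h : i ≤ j) : fillLower W A i j = A i j := if_pos h

theorem fillLower_of_ge (hdiag : ∀ i : Fin n, A i i = (0 : ℤ)) {i j : Fin n} (h : j ≤ i) :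
    fillLower W A i j = (((W : ℤ) * ((j : ℤ) - (i : ℤ)) : ℤ) : WithBot ℤ) := by
  rcases h.eq_or_lt with rfl | h
  · simp [fillLower, hdiag]
  · exact if_neg (not_le.2 h)

theorem exists_fillLower_eq_coe (hfin : ∀ i j : Fin n, i ≤ j → ∃ x : ℤ, A i j = (x : WithBot ℤ))
    (i j : Fin n) : ∃ x : ℤ, fillLower W A i j = (x : WithBot ℤ) := by
  unfold fillLower
  split_ifs with h
  exacts [hfin i j h, ⟨_, rfl⟩]

theorem fillLower_boundedDiff_col (hdiag : ∀ i : Fin n, A i i = (0 : ℤ))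
    (hbdH : ∀ (i j : Fin n) (h : (j : ℕ) + 1 < n), i ≤ j →
        A i j ≤ A i ⟨(j : ℕ) + 1, h⟩ + ((W : ℤ) : WithBot ℤ) ∧
        A i ⟨(j : ℕ) + 1, h⟩ ≤ A i j + ((W : ℤ) : WithBot ℤ))
    (i j : Fin n) (h : (j : ℕ) + 1 < n) :
    fillLower W A i j ≤ fillLower W A i ⟨(j : ℕ) + 1, h⟩ + ((W : ℤ) : WithBot ℤ) ∧
      fillLower W A i ⟨(j : ℕ) + 1, h⟩ ≤ fillLower W A i j + ((W : ℤ) : WithBot ℤ) := by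
  rcases le_or_gt i j with hij | hji
  · rw [fillLower_of_le hij, fillLower_of_le (hij.trans (Fin.le_def.2 (Nat.le_succ _)))]
    exact hbdH i j h hij
  · rw [fillLower_of_ge hdiag hji.le, fillLower_of_ge hdiag hji]
    simp only [← WithBot.coe_add, WithBot.coe_le_coe]
    constructor <;> push_cast <;> linarith

theorem fillLower_boundedDiff_row (hdiag : ∀ i : Fin n, A i i = (0 : ℤ))
    (hbdV : ∀ (i j : Fin n) (h : (i : ℕ) + 1 < n), (i : ℕ) + 1 ≤ (j : ℕ) →
        A i j ≤ A ⟨(i : ℕ) + 1, h⟩ j + ((W : ℤ) : WithBot ℤ) ∧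
        A ⟨(i : ℕ) + 1, h⟩ j ≤ A i j + ((W : ℤ) : WithBot ℤ))
    (i j : Fin n) (h : (i : ℕ) + 1 < n) :
    fillLower W A i j ≤ fillLower W A ⟨(i : ℕ) + 1, h⟩ j + ((W : ℤ) : WithBot ℤ) ∧
      fillLower W A ⟨(i : ℕ) + 1, h⟩ j ≤ fillLower W A i j + ((W : ℤ) : WithBot ℤ) := by
  rcases le_or_gt ((i : ℕ) + 1) j with hij | hji
  · rw [fillLower_of_le (Fin.le_def.2 (by omega)), fillLower_of_le (Fin.le_def.2 hij)]
    exact hbdV i j h hij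
  · rw [fillLower_of_ge hdiag (Fin.le_def.2 (by omega)),
      fillLower_of_ge hdiag (Fin.le_def.2 (by simp only; omega))]
    simp only [← WithBot.coe_add, WithBot.coe_le_coe]
    constructor <;> push_cast <;> linarith

theorem nsmul_natCast_eq_coe_neg_mul (W : ℕ) {a b : ℕ} (h : a ≤ b) :
    (b - a) • ((W : ℤ) : WithBot ℤ) = ((-((W : ℤ) * ((a : ℤ) - (b : ℤ))) : ℤ) : WithBot ℤ) := by
  rw [← WithBot.coe_nsmul, nsmul_eq_mul, Nat.cast_sub h]
  congr 1
  ring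

theorem fillLower_add_fillLower_le_of_lt_left (hAdiag : ∀ i : Fin n, A i i = (0 : ℤ))
    (hBbdV : ∀ (i j : Fin n) (h : (i : ℕ) + 1 < n), (i : ℕ) + 1 ≤ (j : ℕ) →
        B i j ≤ B ⟨(i : ℕ) + 1, h⟩ j + ((W : ℤ) : WithBot ℤ))
    {i j k : Fin n} (hij : i ≤ j) (hki : k < i) :
    fillLower W A i k + fillLower W B k j ≤ fillLower W A i i + fillLower W B i j := by
  have hchain : B k j ≤ B i j + ((i : ℕ) - k) • ((W : ℤ) : WithBot ℤ) :=
    Fin.le_add_nsmul_of_le_succ (fun m => B m j) _ hki.le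
      fun m h hm => hBbdV m j h (hm.trans hij)
  rw [nsmul_natCast_eq_coe_neg_mul W hki.le] at hchain
  rw [fillLower_of_ge hAdiag hki.le, fillLower_of_le le_rfl, hAdiag,
    fillLower_of_le (hki.le.trans hij), fillLower_of_le hij, WithBot.coe_zero, zero_add]
  exact WithBot.coe_add_le_of_le_add_coe_neg hchain

theorem fillLower_add_fillLower_le_of_lt_right (hBdiag : ∀ i : Fin n, B i i = (0 : ℤ))
    (hAbdH : ∀ (i j : Fin n) (h : (j : ℕ) + 1 < n), i ≤ j →
        A i ⟨(j : ℕ) + 1, h⟩ ≤ A i j + ((W : ℤ) : WithBot ℤ))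
    {i j k : Fin n} (hij : i ≤ j) (hjk : j < k) :
    fillLower W A i k + fillLower W B k j ≤ fillLower W A i j + fillLower W B j j := by
  have hchain : A i k ≤ A i j + ((k : ℕ) - j) • ((W : ℤ) : WithBot ℤ) :=
    Fin.le_add_nsmul_of_succ_le (A i) _ hjk.le fun m h hm => hAbdH i m h (hij.trans hm)
  rw [nsmul_natCast_eq_coe_neg_mul W hjk.le] at hchain
  rw [fillLower_of_le (hij.trans hjk.le), fillLower_of_ge hBdiag hjk.le, fillLower_of_le hij,
    fillLower_of_le le_rfl, hBdiag, WithBot.coe_zero, add_zero, add_comm]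
  exact WithBot.coe_add_le_of_le_add_coe_neg hchain

theorem sup_fillLower_add_fillLower (hAtri : ∀ i j : Fin n, j < i → A i j = ⊥)
    (hAdiag : ∀ i : Fin n, A i i = (0 : ℤ))
    (hAbdH : ∀ (i j : Fin n) (h : (j : ℕ) + 1 < n), i ≤ j →
        A i ⟨(j : ℕ) + 1, h⟩ ≤ A i j + ((W : ℤ) : WithBot ℤ))
    (hBtri : ∀ i j : Fin n, j < i → B i j = ⊥) (hBdiag : ∀ i : Fin n, B i i = (0 : ℤ))
    (hBbdV : ∀ (i j : Fin n) (h : (i : ℕ) + 1 < n), (i : ℕ) + 1 ≤ (j : ℕ) →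
        B i j ≤ B ⟨(i : ℕ) + 1, h⟩ j + ((W : ℤ) : WithBot ℤ))
    {i j : Fin n} (hij : i ≤ j) :
    (univ.sup fun k => fillLower W A i k + fillLower W B k j) = univ.sup fun k => A i k + B k j := by
  have hmid : ∀ k, i ≤ k → k ≤ j → fillLower W A i k + fillLower W B k j = A i k + B k j :=
    fun k hik hkj => by rw [fillLower_of_le hik, fillLower_of_le hkj]
  apply le_antisymm <;> refine Finset.sup_le fun k _ => ?_
  · rcases lt_or_ge k i with hki | hik
    · exact le_sup_of_le (mem_univ i)
        ((fillLower_add_fillLower_le_of_lt_left hAdiag hBbdV hij hki).trans (hmid i le_rfl hij).le)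
    rcases le_or_gt k j with hkj | hjk
    · exact le_sup_of_le (mem_univ k) (hmid k hik hkj).le
    · exact le_sup_of_le (mem_univ j)
        ((fillLower_add_fillLower_le_of_lt_right hBdiag hAbdH hij hjk).trans (hmid j hij le_rfl).le)
  · rcases lt_or_ge k i with hki | hik
    · simp [hAtri i k hki]
    rcases le_or_gt k j with hkj | hjk
    · exact le_sup_of_le (mem_univ k) (hmid k hik hkj).ge
    · simp [hBtri k j hjk]

end FillLower

theorem maxplus_fill_lower_triangle_general {n : ℕ} (W : ℕ) (A B : Fin n → Fin n → WithBot ℤ)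
    (hAtri : ∀ i j : Fin n, j < i → A i j = ⊥)
    (hAfin : ∀ i j : Fin n, i ≤ j → ∃ x : ℤ, A i j = (x : WithBot ℤ))
    (hAdiag : ∀ i : Fin n, A i i = (0 : ℤ))
    (hAbdH : ∀ (i j : Fin n) (h : (j : ℕ) + 1 < n), i ≤ j →
        A i j ≤ A i ⟨(j : ℕ) + 1, h⟩ + ((W : ℤ) : WithBot ℤ) ∧
        A i ⟨(j : ℕ) + 1, h⟩ ≤ A i j + ((W : ℤ) : WithBot ℤ))
    (hAbdV : ∀ (i j : Fin n) (h : (i : ℕ) + 1 < n), (i : ℕ) + 1 ≤ (j : ℕ) →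
        A i j ≤ A ⟨(i : ℕ) + 1, h⟩ j + ((W : ℤ) : WithBot ℤ) ∧
        A ⟨(i : ℕ) + 1, h⟩ j ≤ A i j + ((W : ℤ) : WithBot ℤ))
    (hBtri : ∀ i j : Fin n, j < i → B i j = ⊥)
    (hBdiag : ∀ i : Fin n, B i i = (0 : ℤ))
    (hBbdV : ∀ (i j : Fin n) (h : (i : ℕ) + 1 < n), (i : ℕ) + 1 ≤ (j : ℕ) →
        B i j ≤ B ⟨(i : ℕ) + 1, h⟩ j + ((W : ℤ) : WithBot ℤ) ∧
        B ⟨(i : ℕ) + 1, h⟩ j ≤ B i j + ((W : ℤ) : WithBot ℤ)) :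
    letI Abar : Fin n → Fin n → WithBot ℤ :=
      fun i j => if i ≤ j then A i j else (((W : ℤ) * ((j : ℤ) - (i : ℤ)) : ℤ) : WithBot ℤ)
    letI Bbar : Fin n → Fin n → WithBot ℤ :=
      fun i j => if i ≤ j then B i j else (((W : ℤ) * ((j : ℤ) - (i : ℤ)) : ℤ) : WithBot ℤ)
    (∀ i j : Fin n, ∃ x : ℤ, Abar i j = (x : WithBot ℤ)) ∧
    (∀ (i j : Fin n) (h : (j : ℕ) + 1 < n),
        Abar i j ≤ Abar i ⟨(j : ℕ) + 1, h⟩ + ((W : ℤ) : WithBot ℤ) ∧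
        Abar i ⟨(j : ℕ) + 1, h⟩ ≤ Abar i j + ((W : ℤ) : WithBot ℤ)) ∧
    (∀ (i j : Fin n) (h : (i : ℕ) + 1 < n),
        Abar i j ≤ Abar ⟨(i : ℕ) + 1, h⟩ j + ((W : ℤ) : WithBot ℤ) ∧
        Abar ⟨(i : ℕ) + 1, h⟩ j ≤ Abar i j + ((W : ℤ) : WithBot ℤ)) ∧
    (∀ i j : Fin n, i ≤ j →
        (Finset.univ.sup fun k => Abar i k + Bbar k j) =
          Finset.univ.sup fun k => A i k + B k j) :=
  ⟨exists_fillLower_eq_coe hAfin, fillLower_boundedDiff_col hAdiag hAbdH,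
    fillLower_boundedDiff_row hAdiag hAbdV,
    fun _ _ hij => sup_fillLower_add_fillLower hAtri hAdiag (fun i j h hij => (hAbdH i j h hij).2)
      hBtri hBdiag (fun i j h hij => (hBbdV i j h hij).1) hij⟩

/-- Filling the lower triangle of a finite-upper-triangular `W`-bounded-difference matrix
with zeros on the diagonal by `W·(j - i)` yields a `W`-bounded-difference matrix (all
entries finite, adjacent entries differ by at most `W`), and the max-plus product of two
such modified matrices agrees with the original product on all entries on or above the
main diagonal. -/
theorem maxplus_fill_lower_triangle {n : ℕ} (W : ℕ) (A B : Fin n → Fin n → WithBot ℤ)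
    (hAtri : ∀ i j : Fin n, j < i → A i j = ⊥)
    (hAfin : ∀ i j : Fin n, i ≤ j → ∃ x : ℤ, A i j = (x : WithBot ℤ))
    (hAdiag : ∀ i : Fin n, A i i = (0 : ℤ))
    (hAbdH : ∀ (i j : Fin n) (h : (j : ℕ) + 1 < n), i ≤ j →
        A i j ≤ A i ⟨(j : ℕ) + 1, h⟩ + ((W : ℤ) : WithBot ℤ) ∧
        A i ⟨(j : ℕ) + 1, h⟩ ≤ A i j + ((W : ℤ) : WithBot ℤ))
    (hAbdV : ∀ (i j : Fin n) (h : (i : ℕ) + 1 < n), (i : ℕ) + 1 ≤ (j : ℕ) →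
        A i j ≤ A ⟨(i : ℕ) + 1, h⟩ j + ((W : ℤ) : WithBot ℤ) ∧
        A ⟨(i : ℕ) + 1, h⟩ j ≤ A i j + ((W : ℤ) : WithBot ℤ))
    (hBtri : ∀ i j : Fin n, j < i → B i j = ⊥)
    (hBfin : ∀ i j : Fin n, i ≤ j → ∃ x : ℤ, B i j = (x : WithBot ℤ))
    (hBdiag : ∀ i : Fin n, B i i = (0 : ℤ))
    (hBbdH : ∀ (i j : Fin n) (h : (j : ℕ) + 1 < n), i ≤ j →
        B i j ≤ B i ⟨(j : ℕ) + 1, h⟩ + ((W : ℤ) : WithBot ℤ) ∧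
        B i ⟨(j : ℕ) + 1, h⟩ ≤ B i j + ((W : ℤ) : WithBot ℤ))
    (hBbdV : ∀ (i j : Fin n) (h : (i : ℕ) + 1 < n), (i : ℕ) + 1 ≤ (j : ℕ) →
        B i j ≤ B ⟨(i : ℕ) + 1, h⟩ j + ((W : ℤ) : WithBot ℤ) ∧
        B ⟨(i : ℕ) + 1, h⟩ j ≤ B i j + ((W : ℤ) : WithBot ℤ)) :
    letI Abar : Fin n → Fin n → WithBot ℤ :=
      fun i j => if i ≤ j then A i j else (((W : ℤ) * ((j : ℤ) - (i : ℤ)) : ℤ) : WithBot ℤ)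
    letI Bbar : Fin n → Fin n → WithBot ℤ :=
      fun i j => if i ≤ j then B i j else (((W : ℤ) * ((j : ℤ) - (i : ℤ)) : ℤ) : WithBot ℤ)
    (∀ i j : Fin n, ∃ x : ℤ, Abar i j = (x : WithBot ℤ)) ∧
    (∀ (i j : Fin n) (h : (j : ℕ) + 1 < n),
        Abar i j ≤ Abar i ⟨(j : ℕ) + 1, h⟩ + ((W : ℤ) : WithBot ℤ) ∧
        Abar i ⟨(j : ℕ) + 1, h⟩ ≤ Abar i j + ((W : ℤ) : WithBot ℤ)) ∧
    (∀ (i j : Fin n) (h : (i : ℕ) + 1 < n),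
        Abar i j ≤ Abar ⟨(i : ℕ) + 1, h⟩ j + ((W : ℤ) : WithBot ℤ) ∧
        Abar ⟨(i : ℕ) + 1, h⟩ j ≤ Abar i j + ((W : ℤ) : WithBot ℤ)) ∧
    (∀ i j : Fin n, i ≤ j →
        (Finset.univ.sup fun k => Abar i k + Bbar k j) =
          Finset.univ.sup fun k => A i k + B k j) :=
  maxplus_fill_lower_triangle_general W A B hAtri hAfin hAdiag hAbdH hAbdV hBtri hBdiag hBbdV
end

section
/- For strings s1, s3 and a string s2 of length m, define the (m+1)×(m+1) similarity matrix B(s) by B(s)_{ij} = sim(s, s2[i,j)) for i ≤ j and -∞ otherwise. Then B(s1 + s3)_{ij} = max_k ( B(s1)_{ik} + B(s3)_{kj} ), i.e., the similarity matrix of a concatenation is the max-plus product of the similarity matrices. -/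
/-!
Concatenating edit sequences gives `sim s₁ t₁ + sim s₃ t₂ ≤ sim (s₁ ++ s₃) (t₁ ++ t₂)`, and
`s2[i, k) ++ s2[k, j) = s2[i, j)`, so every term of the max-plus product is at most the left side.
Conversely, each single deletion or substitution acts on one side of a given cut, so the cut
between `s₁` and `s₃` can be traced through an optimal pair of edit sequences to the common
target, and from there back to a cut `t = t₁ ++ t₂` of the other string with
`ed s₁ t₁ + ed s₃ t₂ ≤ ed (s₁ ++ s₃) t`; when `t = s2[i, j)` the pieces are `s2[i, k)`, `s2[k, j)`.
-/

/-- A single string edit operation applied to one string: delete a character or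
substitute a character. -/
inductive SStep {α : Type} : List α → List α → Prop
  | delete (pre : List α) (a : α) (post : List α) : SStep (pre ++ a :: post) (pre ++ post)
  | subst (pre : List α) (a b : α) (post : List α) : SStep (pre ++ a :: post) (pre ++ b :: post)

/-- `SSteps n s t`: `t` is obtained from `s` by exactly `n` string edit operations. -/
inductive SSteps {α : Type} : ℕ → List α → List α → Prop
  | refl (s : List α) : SSteps 0 s s
  | tail {n : ℕ} {s t u : List α} : SSteps n s t → SStep t u → SSteps (n + 1) s u

/-- The (unit-cost) string edit distance: the minimum total number of operations applied
to `s` and `t` so that they become identical (equivalently, the minimum number of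
insertions, deletions and substitutions transforming `s` into `t`). -/
noncomputable def edS {α : Type} (s t : List α) : ℕ :=
  sInf {k | ∃ (k1 k2 : ℕ) (u : List α), k = k1 + k2 ∧ SSteps k1 s u ∧ SSteps k2 t u}

/-- The string similarity `sim(s, t) = |s| + |t| - ed(s, t)`. -/
noncomputable def simS {α : Type} (s t : List α) : ℤ :=
  (s.length : ℤ) + t.length - edS s t

/-- The substring `s[l, r)` (1-indexed, from the `l`-th through the `(r-1)`-th character). -/
def substr {α : Type} (s : List α) (l r : ℕ) : List α := (s.drop (l - 1)).take (r - l)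

/-- The `(m+1) × (m+1)` similarity matrix of a string `s` against the substrings of `s2`:
entry `(i, j)` is `sim(s, s2[i, j))` for `1 ≤ i ≤ j ≤ m + 1` and `-∞` otherwise. -/
noncomputable def simMatS {α : Type} (s s2 : List α) : ℕ → ℕ → WithBot ℤ :=
  fun i j =>
    if 1 ≤ i ∧ i ≤ j ∧ j ≤ s2.length + 1 then ((simS s (substr s2 i j) : ℤ) : WithBot ℤ)
    else ⊥

variable {α : Type}

namespace SStep

theorem iff_exists {s t : List α} :
    SStep s t ↔ ∃ pre a r post, r.length ≤ 1 ∧ s = pre ++ a :: post ∧ t = pre ++ r ++ post := by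
  constructor
  · rintro (⟨pre, a, post⟩ | ⟨pre, a, b, post⟩)
    · exact ⟨pre, a, [], post, by simp, rfl, by simp⟩
    · exact ⟨pre, a, [b], post, by simp, rfl, by simp⟩
  · rintro ⟨pre, a, _ | ⟨b, _ | ⟨c, r⟩⟩, post, hr, rfl, rfl⟩
    · simpa using delete pre a post
    · simpa using subst pre a b post
    · simp at hr

theorem of_length_le_one (pre : List α) (a : α) {r : List α} (post : List α) (hr : r.length ≤ 1) :
    SStep (pre ++ a :: post) (pre ++ r ++ post) :=
  iff_exists.2 ⟨pre, a, r, post, hr, rfl, rfl⟩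

theorem append_right {s t : List α} (h : SStep s t) (x : List α) : SStep (s ++ x) (t ++ x) := by
  obtain ⟨pre, a, r, post, hr, rfl, rfl⟩ := iff_exists.1 h
  simpa using of_length_le_one pre a (post ++ x) hr

theorem append_left {s t : List α} (x : List α) (h : SStep s t) : SStep (x ++ s) (x ++ t) := by
  obtain ⟨pre, a, r, post, hr, rfl, rfl⟩ := iff_exists.1 h
  simpa using of_length_le_one (x ++ pre) a post hr

theorem of_append_source {x y u : List α} (h : SStep (x ++ y) u) :
    (∃ x', u = x' ++ y ∧ SStep x x') ∨ (∃ y', u = x ++ y' ∧ SStep y y') := by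
  obtain ⟨pre, a, r, post, hr, hs, rfl⟩ := iff_exists.1 h
  rcases List.append_eq_append_iff.1 hs with ⟨a', rfl, rfl⟩ | ⟨_ | ⟨b, c⟩, rfl, hc⟩
  · exact Or.inr ⟨a' ++ r ++ post, by simp, of_length_le_one a' a post hr⟩
  · simp only [List.nil_append] at hc
    exact Or.inr ⟨r ++ post, by simp, by simpa [← hc] using of_length_le_one [] a post hr⟩
  · obtain ⟨rfl, rfl⟩ := List.cons_eq_cons.1 hc
    exact Or.inl ⟨pre ++ r ++ c, by simp, of_length_le_one pre _ c hr⟩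

theorem of_append_target {w u₁ u₂ : List α} (h : SStep w (u₁ ++ u₂)) :
    ∃ w₁ w₂, w = w₁ ++ w₂ ∧ ((SStep w₁ u₁ ∧ w₂ = u₂) ∨ (w₁ = u₁ ∧ SStep w₂ u₂)) := by
  obtain ⟨pre, a, r, post, hr, rfl, hu⟩ := iff_exists.1 h
  rw [List.append_assoc] at hu
  rcases List.append_eq_append_iff.1 hu with ⟨a', rfl, rfl⟩ | ⟨c, rfl, hc⟩
  · exact ⟨u₁, a' ++ a :: post, by simp, Or.inr ⟨rfl, by simpa using of_length_le_one a' a post hr⟩⟩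
  rcases List.append_eq_append_iff.1 hc with ⟨d, rfl, rfl⟩ | ⟨d, rfl, rfl⟩
  · exact ⟨pre ++ a :: d, u₂, by simp, Or.inl ⟨by simpa using of_length_le_one pre a d hr, rfl⟩⟩
  · rcases c with _ | ⟨b, c⟩
    · exact ⟨pre, a :: post, by simp,
        Or.inr ⟨by simp, by simpa using of_length_le_one [] a post hr⟩⟩
    · obtain ⟨rfl, rfl⟩ : c = [] ∧ d = [] := by
        simp only [List.cons_append, List.length_cons, List.length_append] at hr
        simp only [← List.length_eq_zero_iff]
        omega
      exact ⟨pre ++ [a], post, by simp, Or.inl ⟨by simpa using of_length_le_one pre a [] hr, rfl⟩⟩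

end SStep

namespace SSteps

theorem trans {m n : ℕ} {s t u : List α} (h₁ : SSteps m s t) (h₂ : SSteps n t u) :
    SSteps (m + n) s u := by
  induction h₂ with
  | refl => exact h₁
  | tail _ step ih => exact (ih h₁).tail step

theorem append_right {n : ℕ} {s t : List α} (h : SSteps n s t) (x : List α) :
    SSteps n (s ++ x) (t ++ x) := by
  induction h with
  | refl => exact refl _
  | tail _ step ih => exact ih.tail (step.append_right x)

theorem append_left {n : ℕ} (x : List α) {s t : List α} (h : SSteps n s t) :
    SSteps n (x ++ s) (x ++ t) := by
  induction h with
  | refl => exact refl _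
  | tail _ step ih => exact ih.tail (step.append_left x)

theorem append {m n : ℕ} {s t s' t' : List α} (h : SSteps m s t) (h' : SSteps n s' t') :
    SSteps (m + n) (s ++ s') (t ++ t') :=
  (h.append_right s').trans (h'.append_left t)

theorem length_nil (s : List α) : SSteps s.length s [] := by
  induction s with
  | nil => exact refl _
  | cons a s ih =>
    simpa [Nat.add_comm] using ((refl (a :: s)).tail (SStep.delete [] a s)).trans ih

theorem exists_of_append_source {n : ℕ} {x y u : List α} (h : SSteps n (x ++ y) u) :
    ∃ u₁ u₂ a b, u = u₁ ++ u₂ ∧ n = a + b ∧ SSteps a x u₁ ∧ SSteps b y u₂ := by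
  generalize hs : x ++ y = s at h
  induction h with
  | refl => exact ⟨x, y, 0, 0, hs.symm, rfl, refl _, refl _⟩
  | tail _ step ih =>
    obtain ⟨t₁, t₂, a, b, rfl, rfl, h₁, h₂⟩ := ih hs
    rcases step.of_append_source with ⟨x', rfl, hx⟩ | ⟨y', rfl, hy⟩
    · exact ⟨x', t₂, a + 1, b, rfl, by omega, h₁.tail hx, h₂⟩
    · exact ⟨t₁, y', a, b + 1, rfl, by omega, h₁, h₂.tail hy⟩

theorem exists_of_append_target {n : ℕ} {t u₁ u₂ : List α} (h : SSteps n t (u₁ ++ u₂)) :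
    ∃ t₁ t₂ c d, t = t₁ ++ t₂ ∧ n = c + d ∧ SSteps c t₁ u₁ ∧ SSteps d t₂ u₂ := by
  generalize hu : u₁ ++ u₂ = u at h
  induction h generalizing u₁ u₂ with
  | refl => exact ⟨u₁, u₂, 0, 0, hu.symm, rfl, refl _, refl _⟩
  | tail _ step ih =>
    subst hu
    obtain ⟨w₁, w₂, rfl, hstep⟩ := step.of_append_target
    obtain ⟨t₁, t₂, c, d, rfl, rfl, h₁, h₂⟩ := ih rfl
    rcases hstep with ⟨hs, rfl⟩ | ⟨rfl, hs⟩
    · exact ⟨t₁, t₂, c + 1, d, rfl, by omega, h₁.tail hs, h₂⟩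
    · exact ⟨t₁, t₂, c, d + 1, rfl, by omega, h₁, h₂.tail hs⟩

end SSteps

theorem edS_le_of_ssteps {s t u : List α} {k₁ k₂ : ℕ} (h₁ : SSteps k₁ s u) (h₂ : SSteps k₂ t u) :
    edS s t ≤ k₁ + k₂ :=
  Nat.sInf_le ⟨k₁, k₂, u, rfl, h₁, h₂⟩

theorem exists_ssteps_edS (s t : List α) :
    ∃ k₁ k₂ u, edS s t = k₁ + k₂ ∧ SSteps k₁ s u ∧ SSteps k₂ t u := by
  have hne : ∃ k, ∃ k₁ k₂ u, k = k₁ + k₂ ∧ SSteps k₁ s u ∧ SSteps k₂ t u :=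
    ⟨_, _, _, [], rfl, SSteps.length_nil s, SSteps.length_nil t⟩
  exact Nat.sInf_mem hne

theorem edS_append_le (s₁ s₃ t₁ t₂ : List α) :
    edS (s₁ ++ s₃) (t₁ ++ t₂) ≤ edS s₁ t₁ + edS s₃ t₂ := by
  obtain ⟨a₁, a₂, u, ha, hs, ht⟩ := exists_ssteps_edS s₁ t₁
  obtain ⟨b₁, b₂, v, hb, hs', ht'⟩ := exists_ssteps_edS s₃ t₂
  have := edS_le_of_ssteps (hs.append hs') (ht.append ht')
  omega

theorem exists_append_eq_edS_add_le (s₁ s₃ t : List α) :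
    ∃ t₁ t₂, t = t₁ ++ t₂ ∧ edS s₁ t₁ + edS s₃ t₂ ≤ edS (s₁ ++ s₃) t := by
  obtain ⟨k₁, k₂, u, hk, hs, ht⟩ := exists_ssteps_edS (s₁ ++ s₃) t
  obtain ⟨u₁, u₂, a, b, rfl, rfl, ha, hb⟩ := hs.exists_of_append_source
  obtain ⟨t₁, t₂, c, d, rfl, rfl, hc, hd⟩ := ht.exists_of_append_target
  have := edS_le_of_ssteps ha hc
  have := edS_le_of_ssteps hb hd
  exact ⟨t₁, t₂, rfl, by omega⟩

theorem simS_add_le_simS_append (s₁ s₃ t₁ t₂ : List α) :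
    simS s₁ t₁ + simS s₃ t₂ ≤ simS (s₁ ++ s₃) (t₁ ++ t₂) := by
  have := edS_append_le s₁ s₃ t₁ t₂
  simp only [simS, List.length_append]
  push_cast
  omega

theorem exists_append_eq_simS_append_le (s₁ s₃ t : List α) :
    ∃ t₁ t₂, t = t₁ ++ t₂ ∧ simS (s₁ ++ s₃) t ≤ simS s₁ t₁ + simS s₃ t₂ := by
  obtain ⟨t₁, t₂, rfl, h⟩ := exists_append_eq_edS_add_le s₁ s₃ t
  refine ⟨t₁, t₂, rfl, ?_⟩
  simp only [simS, List.length_append]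
  push_cast
  omega

theorem substr_append_substr (s : List α) {i k j : ℕ} (hi : 1 ≤ i) (hik : i ≤ k) (hkj : k ≤ j) :
    substr s i k ++ substr s k j = substr s i j := by
  have hdrop : s.drop (k - 1) = (s.drop (i - 1)).drop (k - i) := by
    rw [List.drop_drop]; congr 1; omega
  rw [substr, substr, substr, hdrop, ← List.take_add]
  congr 1
  omega

theorem length_substr (s : List α) {i j : ℕ} (hi : 1 ≤ i) (hij : i ≤ j) (hj : j ≤ s.length + 1) :
    (substr s i j).length = j - i := by
  rw [substr, List.length_take, List.length_drop]
  omega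

theorem exists_substr_eq_of_substr_eq_append {s t₁ t₂ : List α} {i j : ℕ} (hi : 1 ≤ i)
    (hij : i ≤ j) (hj : j ≤ s.length + 1) (h : substr s i j = t₁ ++ t₂) :
    ∃ k, i ≤ k ∧ k ≤ j ∧ t₁ = substr s i k ∧ t₂ = substr s k j := by
  have hlen : t₁.length ≤ j - i := by
    have := congrArg List.length h
    rw [length_substr s hi hij hj, List.length_append] at this
    omega
  refine ⟨i + t₁.length, by omega, by omega, List.append_inj ?_ ?_⟩
  · rw [substr_append_substr s hi (by omega) (by omega), h]
  · rw [length_substr s hi (by omega) (by omega)]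
    omega

theorem simMatS_add_simMatS_le (s₁ s₃ s₂ : List α) (i k j : ℕ) :
    simMatS s₁ s₂ i k + simMatS s₃ s₂ k j ≤ simMatS (s₁ ++ s₃) s₂ i j := by
  unfold simMatS
  by_cases hik : 1 ≤ i ∧ i ≤ k ∧ k ≤ s₂.length + 1
  · by_cases hkj : 1 ≤ k ∧ k ≤ j ∧ j ≤ s₂.length + 1
    · rw [if_pos hik, if_pos hkj, if_pos ⟨hik.1, hik.2.1.trans hkj.2.1, hkj.2.2⟩,
        ← substr_append_substr s₂ hik.1 hik.2.1 hkj.2.1]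
      exact_mod_cast simS_add_le_simS_append _ _ _ _
    · simp [if_neg hkj]
  · simp [if_neg hik]

theorem exists_simMatS_append_le_add (s₁ s₃ s₂ : List α) {i j : ℕ}
    (h : 1 ≤ i ∧ i ≤ j ∧ j ≤ s₂.length + 1) :
    ∃ k ∈ Finset.Icc 1 (s₂.length + 1),
      simMatS (s₁ ++ s₃) s₂ i j ≤ simMatS s₁ s₂ i k + simMatS s₃ s₂ k j := by
  obtain ⟨hi, hij, hj⟩ := h
  obtain ⟨t₁, t₂, ht, hle⟩ := exists_append_eq_simS_append_le s₁ s₃ (substr s₂ i j)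
  obtain ⟨k, hik, hkj, rfl, rfl⟩ := exists_substr_eq_of_substr_eq_append hi hij hj ht
  refine ⟨k, Finset.mem_Icc.2 ⟨by omega, by omega⟩, ?_⟩
  rw [simMatS, simMatS, simMatS, if_pos ⟨hi, hij, hj⟩, if_pos ⟨hi, hik, by omega⟩,
    if_pos ⟨by omega, hkj, hj⟩]
  exact_mod_cast hle

/-- The similarity matrix of a concatenation is the max-plus product of the similarity
matrices: `B(s1 + s3)_{ij} = max_k ( B(s1)_{ik} + B(s3)_{kj} )`. -/
theorem simMatS_concat_maxplus {α : Type} (s1 s3 s2 : List α) (i j : ℕ) :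
    simMatS (s1 ++ s3) s2 i j =
      (Finset.Icc 1 (s2.length + 1)).sup fun k => simMatS s1 s2 i k + simMatS s3 s2 k j := by
  refine le_antisymm ?_ (Finset.sup_le fun k _ => simMatS_add_simMatS_le s1 s3 s2 i k j)
  by_cases h : 1 ≤ i ∧ i ≤ j ∧ j ≤ s2.length + 1
  · obtain ⟨k, hk, hle⟩ := exists_simMatS_append_le_add s1 s3 s2 h
    exact hle.trans (Finset.le_sup (f := fun k => simMatS s1 s2 i k + simMatS s3 s2 k j) hk)
  · simp [simMatS, if_neg h]
end
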